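/- Let 2 ≤ p ≤ 4 and let δ₁, δ₂ > 0 satisfy 1 − 2/p ≤ δ₁ ≤ 1 and 1 − 2/p ≤ δ₂ ≤ 1. Let τ be a sequence in T(δ₁, δ₂) such that τ_n ≤ n for all n ≥ 1. Then E_p(τ) = Σ_{k=0}^∞ A_p(τ; k). -/

import Mathlib

open MeasureTheory Real Set

/-- The kernel `K_p(τ; x)`. -/
noncomputable def Kp (p : ℝ) (τ : ℕ → ℝ) (x : ℝ) : ℝ :=
  ∑' n : ℕ, (Set.Ioo (τ n) (τ (n + 1))).indicator
    (fun y => Real.sin (p / 2 * π * (y - n)) / (π * y)) x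

/-- The quantity `E_p(τ)`. -/
noncomputable def Ep (p : ℝ) (τ : ℕ → ℝ) : ℝ :=
  ∫ x in Set.Ioi (0 : ℝ), (max 0 (Kp p τ x)) ^ 2

/-- The set of sequences `T(δ₁, δ₂)`. -/
def Tset (δ₁ δ₂ : ℝ) : Set (ℕ → ℝ) :=
  {τ | τ 0 = 0 ∧ StrictMono τ ∧ δ₁ ≤ τ 1 ∧ ∀ n, 1 ≤ n → δ₂ ≤ τ (n + 1) - τ n}

/-- The supremum `ℰ_p(δ₁, δ₂) = sup_{τ ∈ T(δ₁,δ₂)} E_p(τ)`. -/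
noncomputable def Esup (p δ₁ δ₂ : ℝ) : ℝ := sSup (Ep p '' Tset δ₁ δ₂)

/-- The contribution `A_p(τ; k)` of the `k`-th ray (range `2 ≤ p ≤ 4`, with
`ϱ = 2 - 4/p` and `I_{k,j} = (k + jϱ, k + jϱ + 2/p)`). -/
noncomputable def Ap (p : ℝ) (τ : ℕ → ℝ) (k : ℕ) : ℝ :=
  ∑' j : ℕ,
    ∫ x in ((k : ℝ) + j * (2 - 4 / p))..((k : ℝ) + j * (2 - 4 / p) + 2 / p),
      (Set.Ioo (τ (k + 2 * j)) (τ (k + 2 * j + 1))).indicator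
        (fun y => Real.sin (p / 2 * π * (y - ((k : ℝ) + 2 * j))) ^ 2 / (π ^ 2 * y ^ 2)) x

/-!
On the `n`-th interval `(τ n, τ (n + 1))` the kernel is `sin (p π (x - n) / 2) / (π x)`, and since
`τ (n + 1) ≤ n + 1 ≤ n + 4 / p` its positive part lives exactly on the windows
`(n - 4j/p, n - 4j/p + 2/p)`, `j ≥ 0`. Hence `E_p(τ)` is the sum of nonnegative masses indexed by
`(n, j)`. A window with `n < 2j` lies to the left of `n (1 - 2/p) ≤ τ n` and carries no mass;
writing `n = k + 2j` turns the remaining windows into the `I_{k,j}`, and regrouping by `k` gives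
`∑ₖ A_p(τ; k)`. The regrouping is legitimate because `E_p(τ)` is finite: `K_p` is bounded near `0`
and `O(1/x)` at infinity.
-/

open scoped ENNReal

theorem Real.sin_pos_iff_exists_int {θ : ℝ} :
    0 < sin θ ↔ ∃ m : ℤ, θ ∈ Ioo (2 * m * π) (2 * m * π + π) := by
  constructor
  · intro h
    have h2π : 0 < 2 * π := by positivity
    set m := ⌊θ / (2 * π)⌋
    have hlo : 0 ≤ θ - m * (2 * π) := Int.sub_floor_div_mul_nonneg θ h2π
    have hhi : θ - m * (2 * π) < 2 * π := Int.sub_floor_div_mul_lt θ h2π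
    have hsin : sin (θ - m * (2 * π)) = sin θ := sin_sub_int_mul_two_pi θ m
    refine ⟨m, ?_, ?_⟩
    · by_contra! hle
      rw [show θ - m * (2 * π) = 0 by linarith, sin_zero] at hsin
      linarith
    · by_contra! hge
      have := sin_nonpos_of_nonpos_of_neg_pi_le (x := θ - m * (2 * π) - 2 * π)
        (by linarith) (by linarith)
      rw [sin_sub_two_pi, hsin] at this
      linarith
  · rintro ⟨m, hlo, hhi⟩
    rw [← sin_sub_int_mul_two_pi θ m]
    exact sin_pos_of_pos_of_lt_pi (by linarith) (by linarith)

theorem ENNReal.toReal_tsum_tsum_of_ne_top {α β : Type*} {f : α → β → ℝ≥0∞}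
    (h : ∑' a, ∑' b, f a b ≠ ∞) :
    (∑' a, ∑' b, f a b).toReal = ∑' a, ∑' b, (f a b).toReal := by
  have hrow : ∀ a, ∑' b, f a b ≠ ∞ := fun a => ne_top_of_le_ne_top h (ENNReal.le_tsum a)
  rw [ENNReal.tsum_toReal_eq hrow]
  exact tsum_congr fun a =>
    ENNReal.tsum_toReal_eq fun b => ne_top_of_le_ne_top (hrow a) (ENNReal.le_tsum b)

/-- The `j`-th interval to the left of `n` on which `x ↦ sin (p π (x - n) / 2)` is positive. -/
def sinPosWindow (p : ℝ) (n j : ℕ) : Set ℝ :=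
  Ioo (n - 4 * j / p) (n - 4 * j / p + 2 / p)

/-- The square of the `n`-th branch of `K_p`. -/
noncomputable def sqKernel (p : ℝ) (n : ℕ) (x : ℝ) : ℝ :=
  sin (p / 2 * π * (x - n)) ^ 2 / (π ^ 2 * x ^ 2)

noncomputable def windowMass (p : ℝ) (τ : ℕ → ℝ) (n j : ℕ) : ℝ≥0∞ :=
  ∫⁻ x in Ioo (τ n) (τ (n + 1)) ∩ sinPosWindow p n j, ENNReal.ofReal (sqKernel p n x)

theorem measurable_sqKernel (p : ℝ) (n : ℕ) : Measurable (sqKernel p n) := by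
  unfold sqKernel
  fun_prop

theorem sqKernel_nonneg (p : ℝ) (n : ℕ) (x : ℝ) : 0 ≤ sqKernel p n x := by
  unfold sqKernel
  positivity

section Windows

variable {p : ℝ} {n : ℕ} {x : ℝ}

theorem sin_pos_iff_exists_mem_sinPosWindow (hp : 0 < p) (hx : x < n + 4 / p) :
    0 < sin (p / 2 * π * (x - n)) ↔ ∃ j, x ∈ sinPosWindow p n j := by
  have hc : 0 < p / 2 * π := by positivity
  have hscale : ∀ t : ℝ, p / 2 * π * (x - n) ∈ Ioo (-2 * t * π) (-2 * t * π + π) ↔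
      x ∈ Ioo (n - 4 * t / p) (n - 4 * t / p + 2 / p) := by
    intro t
    have hlo : -2 * t * π = p / 2 * π * (-(4 * t / p)) := by field_simp; ring
    have hhi : -2 * t * π + π = p / 2 * π * (-(4 * t / p) + 2 / p) := by field_simp; ring
    rw [mem_Ioo, mem_Ioo, hhi, hlo, mul_lt_mul_iff_right₀ hc, mul_lt_mul_iff_right₀ hc]
    constructor <;> rintro ⟨h₁, h₂⟩ <;> constructor <;> linarith
  rw [sin_pos_iff_exists_int]
  constructor
  · rintro ⟨m, hm⟩
    have hθ : p / 2 * π * (x - n) < 2 * π := by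
      calc p / 2 * π * (x - n) < p / 2 * π * (4 / p) := by gcongr; linarith
        _ = 2 * π := by field_simp; ring
    have hm0 : m ≤ 0 := by
      have : (m : ℝ) < 1 := by nlinarith [hm.1, pi_pos]
      exact Int.lt_add_one_iff.1 (by exact_mod_cast this)
    obtain ⟨j, rfl⟩ := Int.exists_eq_neg_ofNat hm0
    exact ⟨j, (hscale j).1 (by simpa using hm)⟩
  · rintro ⟨j, hj⟩
    exact ⟨-j, by simpa using (hscale j).2 hj⟩

theorem pairwise_disjoint_sinPosWindow (hp : 0 < p) (n : ℕ) :
    Pairwise (Function.onFun Disjoint (sinPosWindow p n)) := by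
  refine (pairwise_disjoint_on _).2 fun i j hij => Set.disjoint_left.2 fun x hi hj => ?_
  have : 4 * ((i : ℝ) + 1) / p ≤ 4 * j / p := by gcongr; exact_mod_cast hij
  have : 4 * ((i : ℝ) + 1) / p = 4 * i / p + 2 / p + 2 / p := by ring
  have : 0 < 2 / p := by positivity
  linarith [hi.1, hj.2]

theorem sinPosWindow_add_two_mul (p : ℝ) (k j : ℕ) :
    sinPosWindow p (k + 2 * j) j =
      Ioo (k + j * (2 - 4 / p)) (k + j * (2 - 4 / p) + 2 / p) := by
  simp only [sinPosWindow]
  push_cast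
  ring_nf

end Windows

section Kernel

variable {p : ℝ} {τ : ℕ → ℝ} {n : ℕ} {x : ℝ}

theorem Monotone.notMem_Ioo_add_one (hτ : Monotone τ) {m : ℕ} (hm : m ≠ n)
    (hx : x ∈ Ioo (τ n) (τ (n + 1))) : x ∉ Ioo (τ m) (τ (m + 1)) := by
  have hdisj : Pairwise (Function.onFun Disjoint fun m => Ioo (τ m) (τ (m + 1))) := by
    simpa only [Order.succ_eq_add_one] using hτ.pairwise_disjoint_on_Ioo_succ
  exact fun hx' => Set.disjoint_left.1 (hdisj hm) hx' hx

theorem Kp_eq_of_mem (hτ : Monotone τ) (hx : x ∈ Ioo (τ n) (τ (n + 1))) :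
    Kp p τ x = sin (p / 2 * π * (x - n)) / (π * x) := by
  rw [Kp, tsum_eq_single n fun m hm => indicator_of_notMem (hτ.notMem_Ioo_add_one hm hx) _,
    indicator_of_mem hx]

theorem Kp_eq_zero_of_forall_notMem (hx : ∀ n, x ∉ Ioo (τ n) (τ (n + 1))) : Kp p τ x = 0 := by
  simp [Kp, indicator_of_notMem (hx _)]

theorem ofReal_sq_max_zero_sin_div_eq_tsum (hp : 0 < p) (hx0 : 0 < x) (hx : x < n + 4 / p) :
    ENNReal.ofReal (max 0 (sin (p / 2 * π * (x - n)) / (π * x)) ^ 2) =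
      ∑' j, (sinPosWindow p n j).indicator (fun y => ENNReal.ofReal (sqKernel p n y)) x := by
  by_cases hW : ∃ j, x ∈ sinPosWindow p n j
  · obtain ⟨j, hj⟩ := hW
    have hsin := (sin_pos_iff_exists_mem_sinPosWindow hp hx).2 ⟨j, hj⟩
    rw [tsum_eq_single j fun i hi => indicator_of_notMem
      (Set.disjoint_left.1 (pairwise_disjoint_sinPosWindow hp n (Ne.symm hi)) hj) _,
      indicator_of_mem hj, max_eq_right (div_pos hsin (by positivity)).le, div_pow, mul_pow,
      sqKernel]
  · rw [not_exists] at hW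
    have hsin : sin (p / 2 * π * (x - n)) ≤ 0 := not_lt.1 fun h =>
      let ⟨j, hj⟩ := (sin_pos_iff_exists_mem_sinPosWindow hp hx).1 h
      hW j hj
    rw [max_eq_left (div_nonpos_of_nonpos_of_nonneg hsin (by positivity))]
    simp [indicator_of_notMem (hW _)]

theorem ofReal_sq_max_zero_Kp_eq_tsum (hp : 0 < p) (hp4 : p ≤ 4) (hτ0 : τ 0 = 0)
    (hτ : Monotone τ) (hτn : ∀ n : ℕ, 1 ≤ n → τ n ≤ n) (x : ℝ) :
    ENNReal.ofReal (max 0 (Kp p τ x) ^ 2) =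
      ∑' n, ∑' j, (Ioo (τ n) (τ (n + 1)) ∩ sinPosWindow p n j).indicator
        (fun y => ENNReal.ofReal (sqKernel p n y)) x := by
  simp only [← indicator_indicator]
  by_cases hS : ∃ n, x ∈ Ioo (τ n) (τ (n + 1))
  · obtain ⟨n, hn⟩ := hS
    have hx0 : 0 < x := (hτ0 ▸ hτ n.zero_le).trans_lt hn.1
    have hxn : x < n + 4 / p := by
      have := hτn (n + 1) n.succ_pos
      have : 1 ≤ 4 / p := (one_le_div hp).2 hp4
      push_cast at *
      linarith [hn.2]
    rw [Kp_eq_of_mem hτ hn, ofReal_sq_max_zero_sin_div_eq_tsum hp hx0 hxn, eq_comm,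
      tsum_eq_single n fun m hm => by simp [indicator_of_notMem (hτ.notMem_Ioo_add_one hm hn)]]
    simp only [indicator_of_mem hn]
  · rw [not_exists] at hS
    simp [Kp_eq_zero_of_forall_notMem hS, indicator_of_notMem (hS _)]

end Kernel

section Mass

variable {p : ℝ} {τ : ℕ → ℝ}

theorem mul_le_of_mem_Tset {δ₁ δ₂ c : ℝ} (hτ : τ ∈ Tset δ₁ δ₂) (h₁ : c ≤ δ₁) (h₂ : c ≤ δ₂)
    (n : ℕ) : n * c ≤ τ n := by
  obtain ⟨hτ0, -, hτ1, hgap⟩ := hτ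
  induction n with
  | zero => simp [hτ0]
  | succ n ih =>
    rcases n with _ | n
    · simpa using h₁.trans hτ1
    · have := hgap (n + 1) n.succ_pos
      push_cast at *
      linarith

theorem windowMass_eq_zero_of_lt (hp : 0 < p) (hτ : ∀ n : ℕ, n * (1 - 2 / p) ≤ τ n)
    {n j : ℕ} (h : n < 2 * j) : windowMass p τ n j = 0 := by
  suffices Ioo (τ n) (τ (n + 1)) ∩ sinPosWindow p n j = ∅ by
    rw [windowMass, this, Measure.restrict_empty, lintegral_zero_measure]
  refine eq_empty_iff_forall_notMem.2 fun x ⟨hxS, hxW⟩ => ?_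
  have : 2 * n / p ≤ (4 * j - 2) / p := by
    gcongr
    have : (n : ℝ) + 1 ≤ 2 * j := by exact_mod_cast h
    linarith
  have : (n : ℝ) * (1 - 2 / p) = n - 2 * n / p := by ring
  have : (n : ℝ) - 4 * j / p + 2 / p = n - (4 * j - 2) / p := by ring
  linarith [hτ n, hxS.1, hxW.2]

theorem tsum_tsum_windowMass_eq (hp : 0 < p) (hτ : ∀ n : ℕ, n * (1 - 2 / p) ≤ τ n) :
    ∑' n, ∑' j, windowMass p τ n j = ∑' k, ∑' j, windowMass p τ (k + 2 * j) j := by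
  rw [ENNReal.tsum_comm, ENNReal.tsum_comm (f := fun k j => windowMass p τ (k + 2 * j) j)]
  refine tsum_congr fun j => ?_
  rw [← ENNReal.summable.sum_add_tsum_nat_add' (k := 2 * j),
    Finset.sum_eq_zero fun n hn => windowMass_eq_zero_of_lt hp hτ (Finset.mem_range.1 hn),
    zero_add]

end Mass

section Integral

variable {p : ℝ} {τ : ℕ → ℝ}

theorem measurable_indicator_windowMass_integrand (p : ℝ) (τ : ℕ → ℝ) (n j : ℕ) :
    Measurable ((Ioo (τ n) (τ (n + 1)) ∩ sinPosWindow p n j).indicator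
      fun y => ENNReal.ofReal (sqKernel p n y)) :=
  (measurable_sqKernel p n).ennreal_ofReal.indicator (measurableSet_Ioo.inter measurableSet_Ioo)

theorem lintegral_ofReal_sq_max_zero_Kp (hp : 0 < p) (hp4 : p ≤ 4) (hτ0 : τ 0 = 0)
    (hτ : Monotone τ) (hτn : ∀ n : ℕ, 1 ≤ n → τ n ≤ n) :
    ∫⁻ x, ENNReal.ofReal (max 0 (Kp p τ x) ^ 2) = ∑' n, ∑' j, windowMass p τ n j := by
  have hmeas := measurable_indicator_windowMass_integrand p τ
  simp_rw [ofReal_sq_max_zero_Kp_eq_tsum hp hp4 hτ0 hτ hτn]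
  rw [lintegral_tsum fun n => (Measurable.tsum (hmeas n)).aemeasurable]
  refine tsum_congr fun n => ?_
  rw [lintegral_tsum fun j => (hmeas n j).aemeasurable]
  exact tsum_congr fun j => lintegral_indicator (measurableSet_Ioo.inter measurableSet_Ioo) _

theorem measurable_Kp (p : ℝ) (τ : ℕ → ℝ) : Measurable (Kp p τ) :=
  Measurable.tsum fun n =>
    (by fun_prop : Measurable fun y => sin (p / 2 * π * (y - n)) / (π * y)).indicator
      measurableSet_Ioo

theorem Ep_eq_toReal_lintegral (hτ0 : τ 0 = 0) (hτ : Monotone τ) :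
    Ep p τ = (∫⁻ x, ENNReal.ofReal (max 0 (Kp p τ x) ^ 2)).toReal := by
  have hzero : ∀ x ∉ Ioi (0 : ℝ), max 0 (Kp p τ x) ^ 2 = 0 := fun x hx => by
    rw [Kp_eq_zero_of_forall_notMem fun n hn => hx ((hτ0 ▸ hτ n.zero_le).trans_lt hn.1)]
    simp
  rw [Ep, setIntegral_eq_integral_of_forall_compl_eq_zero hzero,
    integral_eq_lintegral_of_nonneg_ae (ae_of_all _ fun _ => sq_nonneg _)]
  exact (measurable_const.max (measurable_Kp p τ)).pow_const 2 |>.aestronglyMeasurable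

theorem sq_Kp_le (hτ0 : τ 0 = 0) (hτ : StrictMono τ) (x : ℝ) :
    Kp p τ x ^ 2 ≤ (Ioc 0 (τ 1)).indicator (fun _ => (p / 2) ^ 2) x +
      (Ioi (τ 1)).indicator (fun x => (π ^ 2)⁻¹ * x ^ (-2 : ℝ)) x := by
  have hτ1 : 0 < τ 1 := hτ0 ▸ hτ zero_lt_one
  by_cases hS : ∃ n, x ∈ Ioo (τ n) (τ (n + 1))
  · obtain ⟨n, hn⟩ := hS
    have hx0 : 0 < x := (hτ0 ▸ hτ.monotone n.zero_le).trans_lt hn.1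
    rw [Kp_eq_of_mem hτ.monotone hn, div_pow, mul_pow]
    by_cases hx1 : x ≤ τ 1
    · obtain rfl : n = 0 := by
        by_contra h
        exact (hx1.trans (hτ.monotone (Nat.one_le_iff_ne_zero.2 h))).not_gt hn.1
      rw [indicator_of_mem (show x ∈ Ioc 0 (τ 1) from ⟨hx0, hx1⟩),
        indicator_of_notMem (notMem_Ioi.2 hx1), add_zero, div_le_iff₀ (by positivity)]
      calc sin (p / 2 * π * (x - (0 : ℕ))) ^ 2 ≤ (p / 2 * π * (x - (0 : ℕ))) ^ 2 := sin_sq_le_sq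
        _ = (p / 2) ^ 2 * (π ^ 2 * x ^ 2) := by push_cast; ring
    · rw [indicator_of_notMem fun h : x ∈ Ioc 0 (τ 1) => hx1 h.2,
        indicator_of_mem (show x ∈ Ioi (τ 1) from not_le.1 hx1), zero_add,
        rpow_neg_ofNat, zpow_neg, zpow_ofNat, ← mul_inv, div_eq_mul_inv]
      exact mul_le_of_le_one_left (by positivity) (sin_sq_le_one _)
  · rw [Kp_eq_zero_of_forall_notMem (not_exists.1 hS), zero_pow two_ne_zero]
    exact add_nonneg (indicator_nonneg (fun _ _ => by positivity) _)
      (indicator_nonneg (fun y hy => mul_nonneg (by positivity)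
        (rpow_nonneg (hτ1.trans hy).le _)) _)

theorem lintegral_ofReal_sq_max_zero_Kp_ne_top (hτ0 : τ 0 = 0) (hτ : StrictMono τ) :
    ∫⁻ x, ENNReal.ofReal (max 0 (Kp p τ x) ^ 2) ≠ ∞ := by
  have hτ1 : 0 < τ 1 := hτ0 ▸ hτ zero_lt_one
  have hbound : Integrable fun x => (Ioc 0 (τ 1)).indicator (fun _ => (p / 2) ^ 2) x +
      (Ioi (τ 1)).indicator (fun x => (π ^ 2)⁻¹ * x ^ (-2 : ℝ)) x :=
    ((integrableOn_const measure_Ioc_lt_top.ne).integrable_indicator measurableSet_Ioc).add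
      (IntegrableOn.integrable_indicator
        ((integrableOn_Ioi_rpow_of_lt (a := -2) (by norm_num) hτ1).const_mul (π ^ 2)⁻¹)
        measurableSet_Ioi)
  refine ((lintegral_mono fun x => ENNReal.ofReal_le_ofReal ?_).trans_lt
    hbound.lintegral_lt_top).ne
  calc max 0 (Kp p τ x) ^ 2 ≤ |Kp p τ x| ^ 2 :=
        pow_le_pow_left₀ (le_max_left _ _) (max_le (abs_nonneg _) (le_abs_self _)) 2
    _ = Kp p τ x ^ 2 := sq_abs _
    _ ≤ _ := sq_Kp_le hτ0 hτ x

end Integral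

theorem toReal_windowMass (p : ℝ) (τ : ℕ → ℝ) (n j : ℕ) :
    (windowMass p τ n j).toReal =
      ∫ x in Ioo (τ n) (τ (n + 1)) ∩ sinPosWindow p n j, sqKernel p n x := by
  rw [windowMass, integral_eq_lintegral_of_nonneg_ae (ae_of_all _ (sqKernel_nonneg p n))
    (measurable_sqKernel p n).aestronglyMeasurable]

theorem Ap_eq_tsum_toReal_windowMass {p : ℝ} (hp : 0 < p) (τ : ℕ → ℝ) (k : ℕ) :
    Ap p τ k = ∑' j, (windowMass p τ (k + 2 * j) j).toReal := by
  refine tsum_congr fun j => ?_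
  have hle : (k : ℝ) + j * (2 - 4 / p) ≤ k + j * (2 - 4 / p) + 2 / p :=
    le_add_of_nonneg_right (by positivity)
  rw [toReal_windowMass, intervalIntegral.integral_of_le hle, integral_Ioc_eq_integral_Ioo,
    ← sinPosWindow_add_two_mul, setIntegral_indicator measurableSet_Ioo, inter_comm]
  simp only [sqKernel, Nat.cast_add, Nat.cast_mul, Nat.cast_ofNat]

theorem stmt12_general (p δ₁ δ₂ : ℝ) (hp2 : 2 ≤ p) (hp4 : p ≤ 4)
    (h1 : 1 - 2 / p ≤ δ₁) (h2 : 1 - 2 / p ≤ δ₂)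
    (τ : ℕ → ℝ) (hτ : τ ∈ Tset δ₁ δ₂) (hτn : ∀ n : ℕ, 1 ≤ n → τ n ≤ n) :
    Ep p τ = ∑' k : ℕ, Ap p τ k := by
  have hp : 0 < p := by linarith
  have hτ0 : τ 0 = 0 := hτ.1
  have hmono : StrictMono τ := hτ.2.1
  have hlintegral := lintegral_ofReal_sq_max_zero_Kp hp hp4 hτ0 hmono.monotone hτn
  have hreindex := tsum_tsum_windowMass_eq hp (mul_le_of_mem_Tset hτ h1 h2)
  have hfinite : ∑' k, ∑' j, windowMass p τ (k + 2 * j) j ≠ ∞ := by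
    rw [← hreindex, ← hlintegral]
    exact lintegral_ofReal_sq_max_zero_Kp_ne_top hτ0 hmono
  rw [Ep_eq_toReal_lintegral hτ0 hmono.monotone, hlintegral, hreindex,
    ENNReal.toReal_tsum_tsum_of_ne_top hfinite]
  exact tsum_congr fun k => (Ap_eq_tsum_toReal_windowMass hp τ k).symm

theorem stmt12 (p δ₁ δ₂ : ℝ) (hp2 : 2 ≤ p) (hp4 : p ≤ 4)
    (hδ1pos : 0 < δ₁) (hδ2pos : 0 < δ₂)
    (h1 : 1 - 2 / p ≤ δ₁) (h1' : δ₁ ≤ 1) (h2 : 1 - 2 / p ≤ δ₂) (h2' : δ₂ ≤ 1)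
    (τ : ℕ → ℝ) (hτ : τ ∈ Tset δ₁ δ₂) (hτn : ∀ n : ℕ, 1 ≤ n → τ n ≤ n) :
    Ep p τ = ∑' k : ℕ, Ap p τ k :=
  stmt12_general p δ₁ δ₂ hp2 hp4 h1 h2 τ hτ hτn
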